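/- Let L₁,₈ be the 4-dimensional complex ω-Lie algebra with ordered basis (e,x,y,z) defined by the nonzero brackets [e,x] = e + y, [e,y] = −e + z, [x,y] = y, [y,z] = z and the bilinear form determined by ω(e,x) = 1, ω(x,y) = 1 (all other values of ω on basis pairs are 0). Let a,b,c ∈ ℂ and let R be the linear operator on L₁,₈ with R(e) = b·e − b·x + a·z, R(x) = b·e − b·x + a·z, R(y) = −b·e + b·x + c·z, R(z) = 0. Define [p,q]_R := [R(p),q] + [p,R(q)]. Then the bracket [-,-]_R is nilpotent of class at most 2: [[p₁,p₂]_R, p₃]_R = 0 for all p₁, p₂, p₃ ∈ L₁,₈. -/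
import Mathlib


/-- The bracket of the 4-dimensional complex ω-Lie algebra `L₁,₈`, with ordered basis
`(e, x, y, z) = (e₀, e₁, e₂, e₃)`, determined by the nonzero brackets
`[e,x] = e + y`, `[e,y] = −e + z`, `[x,y] = y`, `[y,z] = z`. -/
def L18bracket (u v : Fin 4 → ℂ) : Fin 4 → ℂ :=
  ![(u 0 * v 1 - u 1 * v 0) - (u 0 * v 2 - u 2 * v 0), 0,
    (u 0 * v 1 - u 1 * v 0) + (u 1 * v 2 - u 2 * v 1),
    (u 0 * v 2 - u 2 * v 0) + (u 2 * v 3 - u 3 * v 2)]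

/-- For the operators `R` of the parametrized form `T₁` on `L₁,₈`, the
induced bracket `[p,q]_R = [R p, q] + [p, R q]` is nilpotent of class at most 2. -/
theorem induced_bracket_on_L18_nilpotent
    (a b c : ℂ)
    (R : (Fin 4 → ℂ) →ₗ[ℂ] (Fin 4 → ℂ))
    (hRe : R (Pi.single 0 1) = ![b, -b, 0, a])
    (hRx : R (Pi.single 1 1) = ![b, -b, 0, a])
    (hRy : R (Pi.single 2 1) = ![-b, b, 0, c])
    (hRz : R (Pi.single 3 1) = 0)
    (brR : (Fin 4 → ℂ) → (Fin 4 → ℂ) → (Fin 4 → ℂ))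
    (hbrR : ∀ p q, brR p q = L18bracket (R p) q + L18bracket p (R q)) :
    ∀ p₁ p₂ p₃ : Fin 4 → ℂ, brR (brR p₁ p₂) p₃ = 0 := by
  have hR : ∀ p : Fin 4 → ℂ,
      R p = ![b * (p 0 + p 1 - p 2), -b * (p 0 + p 1 - p 2), 0,
        a * (p 0 + p 1) + c * p 2] := by
    intro p
    have hp : p = p 0 • (Pi.single 0 1 : Fin 4 → ℂ) + p 1 • (Pi.single 1 1 : Fin 4 → ℂ)
        + p 2 • (Pi.single 2 1 : Fin 4 → ℂ) + p 3 • (Pi.single 3 1 : Fin 4 → ℂ) := by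
      funext i; fin_cases i <;> simp
    rw [hp, map_add, map_add, map_add, map_smul, map_smul, map_smul, map_smul,
      hRe, hRx, hRy, hRz]
    funext i; fin_cases i <;> simp <;> ring
  intro p₁ p₂ p₃
  funext i
  simp only [hbrR, hR, L18bracket]
  fin_cases i <;>
    simp [Matrix.cons_val_zero, Matrix.cons_val_one, Pi.add_apply] <;> ring
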